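/- Let L₁, …, L_{κ−1} be a complete set of κ − 1 mutually projective Latin squares of order κ and let c₁ ≠ c₂ be two column indices. Then for every ordered pair (x, y) of distinct symbols there exist exactly one index s (1 ≤ s ≤ κ−1) and exactly one row r such that L_s(r, c₁) = x and L_s(r, c₂) = y; in particular all κ(κ−1) ordered pairs of distinct symbols occur exactly once among the κ(κ−1) rows at columns c₁ and c₂. -/

import Mathlib

/-!
Consider the map sending a square `s` and a row `r` to the pair `(L_s(r, c₁), L_s(r, c₂))`.
Since rows are injective, it takes values among the off-diagonal pairs. It is injective:
two rows of one square already differ in column `c₁`, and rows of two distinct squares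
cannot agree in both columns, because projective squares agree in exactly one column for
every pair of rows. Its domain and the set of off-diagonal pairs both have `κ(κ − 1)`
elements, so it is a bijection onto the off-diagonal pairs.
-/

/-- A Latin square of order κ: each symbol occurs exactly once in every row and
exactly once in every column. -/
def IsLatinSquare {κ : ℕ} (L : Fin κ → Fin κ → Fin κ) : Prop :=
  (∀ i : Fin κ, Function.Bijective fun c => L i c) ∧
  (∀ c : Fin κ, Function.Bijective fun i => L i c)

/-- Two Latin squares are projective if for every row index `i` of the first and
every row index `j` of the second there is exactly one column where they agree. -/
def ProjectivePair {κ : ℕ} (L₁ L₂ : Fin κ → Fin κ → Fin κ) : Prop :=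
  ∀ i j : Fin κ, ∃! c : Fin κ, L₁ i c = L₂ j c

open Finset

theorem ProjectivePair.eq_of_agree {κ : ℕ} {L₁ L₂ : Fin κ → Fin κ → Fin κ}
    (h : ProjectivePair L₁ L₂) {i j c₁ c₂ : Fin κ}
    (h₁ : L₁ i c₁ = L₂ j c₁) (h₂ : L₁ i c₂ = L₂ j c₂) : c₁ = c₂ :=
  (h i j).unique h₁ h₂

section columnPair

variable {ι : Type*} {κ : ℕ} {Ls : ι → Fin κ → Fin κ → Fin κ} {c₁ c₂ : Fin κ}

def columnPair (Ls : ι → Fin κ → Fin κ → Fin κ) (c₁ c₂ : Fin κ) (sr : ι × Fin κ) :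
    Fin κ × Fin κ :=
  (Ls sr.1 sr.2 c₁, Ls sr.1 sr.2 c₂)

theorem columnPair_mem_offDiag (hlatin : ∀ s, IsLatinSquare (Ls s)) (hc : c₁ ≠ c₂)
    (sr : ι × Fin κ) : columnPair Ls c₁ c₂ sr ∈ (univ : Finset (Fin κ)).offDiag :=
  mem_offDiag.2 ⟨mem_univ _, mem_univ _, fun h => hc (((hlatin sr.1).1 sr.2).1 h)⟩

theorem columnPair_injective (hlatin : ∀ s, IsLatinSquare (Ls s))
    (hproj : Pairwise fun s t => ProjectivePair (Ls s) (Ls t)) (hc : c₁ ≠ c₂) :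
    Function.Injective (columnPair Ls c₁ c₂) := by
  rintro ⟨s, r⟩ ⟨t, r'⟩ h
  obtain ⟨h₁, h₂⟩ := Prod.ext_iff.1 h
  obtain rfl : s = t := by
    by_contra hst
    exact hc ((hproj hst).eq_of_agree h₁ h₂)
  obtain rfl : r = r' := ((hlatin s).2 c₁).1 h₁
  rfl

theorem image_columnPair [Fintype ι] (hcard : Fintype.card ι = κ - 1)
    (hlatin : ∀ s, IsLatinSquare (Ls s))
    (hproj : Pairwise fun s t => ProjectivePair (Ls s) (Ls t)) (hc : c₁ ≠ c₂) :
    univ.image (columnPair Ls c₁ c₂) = (univ : Finset (Fin κ)).offDiag := by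
  refine eq_of_subset_of_card_le ?_ ?_
  · simpa only [image_subset_iff] using fun sr _ => columnPair_mem_offDiag hlatin hc sr
  · rw [card_image_of_injective _ (columnPair_injective hlatin hproj hc), offDiag_card,
      card_univ, card_univ, Fintype.card_prod, hcard, Fintype.card_fin, Nat.sub_one_mul]

theorem existsUnique_columnPair_eq [Fintype ι] (hcard : Fintype.card ι = κ - 1)
    (hlatin : ∀ s, IsLatinSquare (Ls s))
    (hproj : Pairwise fun s t => ProjectivePair (Ls s) (Ls t)) (hc : c₁ ≠ c₂)
    {x y : Fin κ} (hxy : x ≠ y) : ∃! sr, columnPair Ls c₁ c₂ sr = (x, y) := by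
  refine (columnPair_injective hlatin hproj hc).existsUnique_of_mem_range ?_
  have hmem : (x, y) ∈ univ.image (columnPair Ls c₁ c₂) := by
    rw [image_columnPair hcard hlatin hproj hc]
    exact mem_offDiag.2 ⟨mem_univ x, mem_univ y, hxy⟩
  simpa only [coe_image, coe_univ, Set.image_univ] using mem_coe.2 hmem

end columnPair

theorem mpls_pairs_in_two_columns {κ : ℕ}
    (Ls : Fin (κ - 1) → (Fin κ → Fin κ → Fin κ))
    (hlatin : ∀ s, IsLatinSquare (Ls s))
    (hproj : ∀ s t, s ≠ t → ProjectivePair (Ls s) (Ls t))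
    (c₁ c₂ : Fin κ) (hc : c₁ ≠ c₂) :
    ∀ x y : Fin κ, x ≠ y →
      ∃! sr : Fin (κ - 1) × Fin κ, Ls sr.1 sr.2 c₁ = x ∧ Ls sr.1 sr.2 c₂ = y := by
  intro x y hxy
  simpa only [columnPair, Prod.ext_iff] using
    existsUnique_columnPair_eq (Fintype.card_fin _) hlatin hproj hc hxy
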